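/- Let S = R[y_1, ..., y_v] be a bigraded polynomial ring over the standard graded algebra R, with bideg f = (deg f, 0) for homogeneous f ∈ R and bideg y_i = (d_i, 1). Let M be a finitely generated bigraded S-module such that the graded R-module M_n = ⊕_a M_{(a,n)} has finite length for all sufficiently large n. Then either a(M_n) = −∞ (i.e. M_n = 0) for all sufficiently large n, or there exist an index i with slope d_i ∈ {d_1, ..., d_v}, an integer e and n0 such that a(M_n) = d_i·n + e for all n ≥ n0. -/

import Mathlib

/-!
Common setup.

We encode a finitely generated standard graded algebra `R` over a field `k` by the data
`StdGraded k R`: the grading `deg : ℤ → Submodule k R` (an internal direct sum, vanishing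
in negative degrees, with `deg 0 = k·1` and `deg (n+1) = deg 1 * deg n`), together with a
finite family `gen` of degree-one elements spanning `deg 1` over `k` (so `R` is generated
in degree one by finitely many elements).

For homogeneous ideals `B ⊆ A` of `R`, the Castelnuovo–Mumford regularity of the graded
module `A/B` is formalized through the classical characterization
`reg M = max { j - i : β_{i,j}(M) ≠ 0 }`, where `β_{i,j}(M) = dim_k (Tor_i^S(M, k))_j` is
the graded Betti number over a polynomial ring `S = k[X_1, …, X_r]` mapping onto `R` via
the chosen degree-one generators.  These Betti numbers are computed honestly as the
homology of the graded Koszul complex `K(x_1, …, x_r; M)` on the degree-one generators: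
`TorNonzero G A B i j` says that this Koszul homology of `A/B` is nonzero in homological
degree `i` and internal degree `j`.  This agrees with the local cohomology definition
`reg M = max { a(H_m^i(M)) + i : i ≥ 0 }` for finitely generated graded modules over a
standard graded algebra.  Similarly, by a theorem of Trung, the partial regularity
`reg_t M = max { a(H_m^i(M)) + i : i ≤ t }` equals
`max { j - i : β_{i,j}(M) ≠ 0, i ≥ r - t }`, which is taken as the definition
`preg` below.
-/

structure StdGraded (k R : Type) [Field k] [CommRing R] [Algebra k R] where
  deg : ℤ → Submodule k R
  internal : DirectSum.IsInternal deg
  bot_of_neg : ∀ i : ℤ, i < 0 → deg i = ⊥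
  deg_zero : deg 0 = 1
  standard : ∀ n : ℕ, deg ((n : ℤ) + 1) = deg 1 * deg (n : ℤ)
  ngens : ℕ
  gen : Fin ngens → R
  gen_mem : ∀ i, gen i ∈ deg 1
  gen_span : Submodule.span k (Set.range gen) = deg 1

variable {k R : Type} [Field k] [CommRing R] [Algebra k R]

/-- The Koszul differential on the Koszul complex (on the degree-one generators of `R`)
with coefficients in `R`; a function `Finset (Fin r) → R` records the coordinates of an
element of an exterior power component with respect to the basis `e_s`. -/
noncomputable def kosD (G : StdGraded k R) (f : Finset (Fin G.ngens) → R) :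
    Finset (Fin G.ngens) → R := fun t =>
  ∑ j ∈ tᶜ, (-1 : R) ^ ((t.filter fun l => l < j).card) * G.gen j * f (insert j t)

/-- `TorNonzero G A B i j` : the internal degree `j` part of the `i`-th homology of the
Koszul complex of the degree-one generators with coefficients in the graded module `A/B`
is nonzero; equivalently, the graded Betti number `β_{i,j}(A/B)` over a polynomial ring
mapping onto `R` is nonzero. -/
def TorNonzero (G : StdGraded k R) (A B : Ideal R) (i : ℕ) (j : ℤ) : Prop :=
  ∃ f : Finset (Fin G.ngens) → R,
    (∀ s, if s.card = i then f s ∈ A ∧ f s ∈ G.deg (j - (i : ℤ)) else f s = 0) ∧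
    (∀ t, kosD G f t ∈ B) ∧
    ¬ ∃ g : Finset (Fin G.ngens) → R,
        (∀ s, if s.card = i + 1 then g s ∈ A ∧ g s ∈ G.deg (j - (i : ℤ) - 1) else g s = 0) ∧
        (∀ s, f s - kosD G g s ∈ B)

/-- The Castelnuovo–Mumford regularity `reg (A/B) = max { a(H_m^i(A/B)) + i : i ≥ 0 }` of
the graded `R`-module `A/B`, via the graded Betti number characterization
`reg = max { j - i : β_{i,j} ≠ 0 }`. -/
noncomputable def reg (G : StdGraded k R) (A B : Ideal R) : ℤ :=
  sSup {e : ℤ | ∃ (i : ℕ) (j : ℤ), e = j - (i : ℤ) ∧ TorNonzero G A B i j}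

/-- The partial regularity `reg_t (A/B) = max { a(H_m^i(A/B)) + i : 0 ≤ i ≤ t }`, via
Trung's characterization `reg_t M = max { j - i : β_{i,j}(M) ≠ 0, i ≥ r - t }`. -/
noncomputable def preg (G : StdGraded k R) (t : ℕ) (A B : Ideal R) : ℤ :=
  sSup {e : ℤ | ∃ (i : ℕ) (j : ℤ), G.ngens - t ≤ i ∧ e = j - (i : ℤ) ∧ TorNonzero G A B i j}

/-- `I` is a homogeneous (graded) ideal. -/
def IsHomogeneousIdeal (G : StdGraded k R) (I : Ideal R) : Prop :=
  ∃ T : Set R, (∀ s ∈ T, ∃ j : ℤ, s ∈ G.deg j) ∧ I = Ideal.span T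

/-- `I` is generated by forms of the single degree `d` (equigenerated). -/
def GeneratedInDegree (G : StdGraded k R) (d : ℕ) (I : Ideal R) : Prop :=
  ∃ T : Set R, T ⊆ (G.deg (d : ℤ) : Set R) ∧ I = Ideal.span T

/-- The irrelevant maximal graded ideal `m = ⊕_{i > 0} R_i` of the standard graded
algebra `R` (generated by the degree-one part). -/
def irrel (G : StdGraded k R) : Ideal R := Ideal.span (G.deg 1 : Set R)

/-- The saturation `Ĩ = ∪_t (I : m^t)` of an ideal `I`. -/
noncomputable def satIdeal (G : StdGraded k R) (I : Ideal R) : Ideal R :=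
  ⨆ t : ℕ, Submodule.colon I (((irrel G) ^ t : Ideal R) : Set R)

open Classical in
/-- The supremum in `WithBot ℤ` of a set of integers: `⊥` (i.e. `-∞`) if the set is
empty.  (Junk value if the set is unbounded above.) -/
noncomputable def zsupBot (s : Set ℤ) : WithBot ℤ :=
  if s.Nonempty then ((sSup s : ℤ) : WithBot ℤ) else ⊥

/-- The saturation degree `sdeg I = a(Ĩ/I) + 1 = a(H_m^0(R/I)) + 1`: the least degree
from which `Ĩ` and `I` agree, `⊥` (i.e. `-∞`) if `Ĩ = I`. -/
noncomputable def sdegB (G : StdGraded k R) (I : Ideal R) : WithBot ℤ :=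
  zsupBot {a : ℤ | ∃ j : ℤ, a = j + 1 ∧ ∃ y : R, y ∈ G.deg j ∧ y ∈ satIdeal G I ∧ y ∉ I}

open MvPolynomial in
/-- The `(a, b)` bigraded piece of the bigraded polynomial ring `S = R[y₁, …, y_v]`,
where `bideg f = (deg f, 0)` for homogeneous `f ∈ R` and `bideg y_i = (d_i, 1)`. -/
noncomputable def bigradePoly (G : StdGraded k R) {v : ℕ} (dd : Fin v → ℕ) (a b : ℤ) :
    Submodule k (MvPolynomial (Fin v) R) :=
  Submodule.span k {p | ∃ (e : Fin v → ℕ) (r : R),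
    r ∈ G.deg (a - ∑ i, (e i : ℤ) * (dd i : ℤ)) ∧ b = ∑ i, (e i : ℤ) ∧
    p = C r * ∏ i, X i ^ e i}

/-!
Since `M` is Noetherian, the part `M_{≥N}` is generated by finitely many bihomogeneous elements,
and since each `M_n` (`n ≥ N`) has finite length, forms of high degree in `R` kill these
generators. Hence `M_{≥N}` is spanned over `k` by the products `y^e z`, with `z` running over a
finite set of bihomogeneous elements of bidegree `(α_z, β_z)`. For each `z` the exponents with
`y^e z ≠ 0` form a lower set `Z_z ⊆ ℕ^v`, and `a(M_n)` is the largest `α_z + Σ e_i d_i` with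
`e ∈ Z_z`, `β_z + |e| = n`.

Let `D` be the largest `d_i` over the directions `i` in which some `Z_z` is unbounded. Following
such a direction gives `a(M_n) ≥ D n + const`. Conversely, for large `n` every top exponent has a
nonzero unbounded coordinate, and lowering it shows `a(M_{n+1}) ≤ a(M_n) + D`. So
`a(M_n) - D n` is eventually non-increasing and bounded below, hence eventually constant.
-/

theorem Pi.sub_single_add_single {σ : Type*} [DecidableEq σ] {e : σ → ℕ} {j : σ}
    (hj : e j ≠ 0) : e - Pi.single j 1 + Pi.single j 1 = e := by
  ext i
  rcases eq_or_ne i j with rfl | h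
  · simpa using Nat.sub_add_cancel (Nat.one_le_iff_ne_zero.2 hj)
  · simp [h]

section Exponents

variable {σ : Type*} [Fintype σ]

def expDeg (e : σ → ℕ) : ℕ := ∑ i, e i

def expWeight (w : σ → ℤ) (e : σ → ℕ) : ℤ := ∑ i, (e i : ℤ) * w i

theorem expDeg_add (e f : σ → ℕ) : expDeg (e + f) = expDeg e + expDeg f :=
  Finset.sum_add_distrib

theorem expWeight_add (w : σ → ℤ) (e f : σ → ℕ) :
    expWeight w (e + f) = expWeight w e + expWeight w f := by
  simp only [expWeight, ← Finset.sum_add_distrib, Pi.add_apply, Nat.cast_add, add_mul]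

theorem expDeg_single [DecidableEq σ] (i : σ) (m : ℕ) : expDeg (Pi.single i m) = m := by
  simp [expDeg]

theorem expWeight_single [DecidableEq σ] (w : σ → ℤ) (i : σ) (m : ℕ) :
    expWeight w (Pi.single i m) = m * w i := by
  simp [expWeight, Pi.single_apply]

theorem le_expDeg (e : σ → ℕ) (i : σ) : e i ≤ expDeg e :=
  Finset.single_le_sum (fun j _ => Nat.zero_le (e j)) (Finset.mem_univ i)

theorem finite_setOf_expDeg_eq (m : ℕ) : {e : σ → ℕ | expDeg e = m}.Finite :=
  (Set.Finite.pi (t := fun _ => Set.Iic m) fun _ => Set.finite_Iic m).subset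
    fun e he i _ => he ▸ le_expDeg e i

theorem exists_unbounded_coord_of_lt_expDeg (Z : Set (σ → ℕ)) :
    ∃ K, ∀ e ∈ Z, K < expDeg e → ∃ j, e j ≠ 0 ∧ ¬BddAbove ((fun f => f j) '' Z) := by
  have hB : ∀ j, ∃ B, BddAbove ((fun f : σ → ℕ => f j) '' Z) → ∀ e ∈ Z, e j ≤ B := by
    intro j
    by_cases hj : BddAbove ((fun f : σ → ℕ => f j) '' Z)
    · obtain ⟨B, hB⟩ := hj
      exact ⟨B, fun _ e he => hB ⟨e, he, rfl⟩⟩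
    · exact ⟨0, fun h => absurd h hj⟩
  choose B hB using hB
  refine ⟨∑ j, B j, fun e he hK => ?_⟩
  by_contra! h
  have hle : ∀ j, e j ≤ B j := fun j =>
    (eq_or_ne (e j) 0).elim (fun h0 => h0 ▸ Nat.zero_le _) fun hj => hB j (h j hj) e he
  exact hK.not_ge (Finset.sum_le_sum fun j _ => hle j)

end Exponents

theorem exists_isGreatest_linear_of_step {A : ℕ → Set ℤ} {D c₀ : ℤ} {N₀ : ℕ}
    (hfin : ∀ n, (A n).Finite) (hlow : ∀ n, N₀ ≤ n → D * n + c₀ ∈ A n)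
    (hstep : ∀ n, N₀ ≤ n → ∀ a ∈ A (n + 1), ∃ b ∈ A n, a ≤ b + D) :
    ∃ c N, ∀ n, N ≤ n → IsGreatest (A n) (D * n + c) := by
  have hmax : ∀ n, N₀ ≤ n → IsGreatest (A n) (sSup (A n)) := fun n hn =>
    ⟨Set.Nonempty.csSup_mem ⟨_, hlow n hn⟩ (hfin n), fun a ha => le_csSup (hfin n).bddAbove ha⟩
  set h : ℕ → ℤ := fun n => sSup (A n) - D * n
  have hdec : ∀ n, N₀ ≤ n → h (n + 1) ≤ h n := by
    intro n hn
    obtain ⟨b, hb, hab⟩ := hstep n hn _ (hmax (n + 1) (by omega)).1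
    have := (hmax n hn).2 hb
    simp only [h]; push_cast; linarith
  have hanti : ∀ m n, N₀ ≤ m → m ≤ n → h n ≤ h m := by
    intro m n hm hmn
    induction n, hmn using Nat.le_induction with
    | base => exact le_rfl
    | succ n hmn ih => exact (hdec n (hm.trans hmn)).trans ih
  obtain ⟨c, ⟨n₁, hn₁, rfl⟩, hmin⟩ := Int.exists_least_of_bdd (P := fun z => ∃ n, N₀ ≤ n ∧ h n = z)
    ⟨c₀, fun _ ⟨n, hn, hz⟩ => hz ▸ by linarith [(hmax n hn).2 (hlow n hn)]⟩ ⟨_, N₀, le_rfl, rfl⟩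
  refine ⟨h n₁, n₁, fun n hn => ?_⟩
  have : h n = h n₁ := le_antisymm (hanti n₁ n hn₁ hn) (hmin _ ⟨n, hn₁.trans hn, rfl⟩)
  convert hmax n (hn₁.trans hn) using 1
  simp only [h] at this; linarith

section Levels

variable {ι σ : Type*} [Fintype σ]

def levelWeights (w : σ → ℤ) (Z : ι → Set (σ → ℕ)) (α : ι → ℤ) (β : ι → ℕ) (n : ℕ) : Set ℤ :=
  {a | ∃ q, ∃ e ∈ Z q, n = β q + expDeg e ∧ a = α q + expWeight w e}

theorem finite_levelWeights [Finite ι] (w : σ → ℤ) (Z : ι → Set (σ → ℕ)) (α : ι → ℤ)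
    (β : ι → ℕ) (n : ℕ) : (levelWeights w Z α β n).Finite := by
  refine (Set.finite_iUnion fun q => (finite_setOf_expDeg_eq (n - β q)).image
    fun e => α q + expWeight w e).subset ?_
  rintro a ⟨q, e, -, hn, rfl⟩
  exact Set.mem_iUnion.2 ⟨q, e, show _ = _ by omega, rfl⟩

theorem eventually_exists_unbounded_coord [Finite ι] (Z : ι → Set (σ → ℕ)) (β : ι → ℕ) :
    ∃ N₀, ∀ n, N₀ < n → ∀ q, ∀ e ∈ Z q, n = β q + expDeg e →
      ∃ j, e j ≠ 0 ∧ ¬BddAbove ((fun f => f j) '' Z q) := by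
  have := Fintype.ofFinite ι
  choose K hK using fun q => exists_unbounded_coord_of_lt_expDeg (Z q)
  refine ⟨∑ q, (β q + K q), fun n hn q e he hne => hK q e he ?_⟩
  have : β q + K q ≤ ∑ q, (β q + K q) :=
    Finset.single_le_sum (f := fun q => β q + K q) (fun _ _ => Nat.zero_le _) (Finset.mem_univ q)
  omega

theorem add_mul_mem_levelWeights {w : σ → ℤ} {Z : ι → Set (σ → ℕ)} {q : ι} (hZ : IsLowerSet (Z q))
    {i : σ} (hi : ¬BddAbove ((fun f => f i) '' Z q)) (α : ι → ℤ) (β : ι → ℕ) (m : ℕ) :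
    α q + m * w i ∈ levelWeights w Z α β (β q + m) := by
  classical
  obtain ⟨_, ⟨e, he, rfl⟩, hlt⟩ := not_bddAbove_iff.1 hi m
  refine ⟨q, Pi.single i m, hZ (fun j => ?_) he, by rw [expDeg_single], by rw [expWeight_single]⟩
  by_cases h : j = i
  · subst h; simpa using hlt.le
  · simp [h]

theorem exists_mem_levelWeights_le_add {w : σ → ℤ} {Z : ι → Set (σ → ℕ)} {q : ι}
    (hZ : IsLowerSet (Z q)) (α : ι → ℤ) (β : ι → ℕ) {n : ℕ} {e : σ → ℕ} (he : e ∈ Z q)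
    (hn : n + 1 = β q + expDeg e) {j : σ} (hj : e j ≠ 0) :
    ∃ b ∈ levelWeights w Z α β n, α q + expWeight w e ≤ b + w j := by
  classical
  have hsplit := Pi.sub_single_add_single hj
  refine ⟨α q + expWeight w (e - Pi.single j 1), ⟨q, _, hZ (hsplit ▸ le_self_add) he, ?_, rfl⟩,
    le_of_eq ?_⟩
  · rw [← hsplit, expDeg_add, expDeg_single] at hn; omega
  · conv_lhs => rw [← hsplit, expWeight_add, expWeight_single]
    push_cast; ring

theorem levelWeights_eventually_empty_or_linear [Finite ι] (w : σ → ℤ) (Z : ι → Set (σ → ℕ))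
    (hZ : ∀ q, IsLowerSet (Z q)) (α : ι → ℤ) (β : ι → ℕ) :
    (∃ N, ∀ n, N ≤ n → levelWeights w Z α β n = ∅) ∨
      ∃ i c N, ∀ n, N ≤ n → IsGreatest (levelWeights w Z α β n) (w i * n + c) := by
  obtain ⟨N₀, hunb⟩ := eventually_exists_unbounded_coord Z β
  set U := {p : ι × σ | ¬BddAbove ((fun f => f p.2) '' Z p.1)}
  rcases U.eq_empty_or_nonempty with hU | hU
  · refine .inl ⟨N₀ + 1, fun n hn => Set.eq_empty_of_forall_notMem ?_⟩
    rintro a ⟨q, e, he, hne, -⟩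
    obtain ⟨j, -, hj⟩ := hunb n (by omega) q e he hne
    exact (Set.eq_empty_iff_forall_notMem.1 hU) (q, j) hj
  obtain ⟨⟨q₀, i₀⟩, hi₀, hmax⟩ := U.exists_max_image (fun p => w p.2) (Set.toFinite U) hU
  refine .inr ⟨i₀, exists_isGreatest_linear_of_step (N₀ := N₀ + β q₀)
    (finite_levelWeights w Z α β) (c₀ := α q₀ - w i₀ * β q₀) (fun n hn => ?_) ?_⟩
  · have hmem := add_mul_mem_levelWeights (w := w) (hZ q₀) hi₀ α β (n - β q₀)
    rw [Nat.add_sub_cancel' (by omega)] at hmem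
    convert hmem using 1
    push_cast [show β q₀ ≤ n by omega]; ring
  · rintro n hn a ⟨q, e, he, hne, rfl⟩
    obtain ⟨j, hj, hjU⟩ := hunb (n + 1) (by omega) q e he hne
    obtain ⟨b, hb, hab⟩ := exists_mem_levelWeights_le_add (hZ q) α β he hne hj
    exact ⟨b, hb, hab.trans (by simpa using hmax (q, j) hjU)⟩

end Levels

namespace StdGraded

variable (G : StdGraded k R)

theorem deg_natCast (n : ℕ) : G.deg n = G.deg 1 ^ n := by
  induction n with
  | zero => simpa using G.deg_zero
  | succ n ih => rw [Nat.cast_succ, G.standard, ih, pow_succ']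

theorem deg_fg (δ : ℤ) : (G.deg δ).FG := by
  rcases lt_or_ge δ 0 with hδ | hδ
  · rw [G.bot_of_neg δ hδ]; exact Submodule.fg_bot
  · lift δ to ℕ using hδ
    rw [deg_natCast, ← G.gen_span]
    exact (Submodule.fg_span (Set.finite_range _)).pow δ

theorem deg_le_adjoin_gen (δ : ℤ) :
    G.deg δ ≤ Subalgebra.toSubmodule (Algebra.adjoin k (Set.range G.gen)) := by
  rcases lt_or_ge δ 0 with hδ | hδ
  · rw [G.bot_of_neg δ hδ]; exact bot_le
  · lift δ to ℕ using hδ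
    rw [deg_natCast, ← G.gen_span]
    induction δ with
    | zero => simp [Submodule.one_le]
    | succ n ih =>
      rw [pow_succ]
      exact (mul_le_mul' ih (Algebra.span_le_adjoin k _)).trans
        ((Subalgebra.mul_toSubmodule_le _ _).trans (by rw [sup_idem]))

theorem adjoin_gen_eq_top : Algebra.adjoin k (Set.range G.gen) = ⊤ := by
  refine Subalgebra.toSubmodule_injective (top_le_iff.1 ?_)
  rw [← G.internal.submodule_iSup_eq_top]
  exact iSup_le G.deg_le_adjoin_gen

end StdGraded

theorem StdGraded.isNoetherianRing (G : StdGraded k R) : IsNoetherianRing R :=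
  have : Algebra.FiniteType k R :=
    ⟨⟨(Set.finite_range G.gen).toFinset, by simpa using G.adjoin_gen_eq_top⟩⟩
  Algebra.FiniteType.isNoetherianRing k R

theorem iSupIndep.mem_of_mem_iSup_of_le {ι K M : Type*} [Ring K] [AddCommGroup M] [Module K M]
    {ℳ N : ι → Submodule K M} (hℳ : iSupIndep ℳ) (hN : ∀ i, N i ≤ ℳ i) {i : ι} {m : M}
    (hm : m ∈ ℳ i) (hmN : m ∈ ⨆ j, N j) : m ∈ N i := by
  rw [iSup_split_single N i, Submodule.mem_sup] at hmN
  obtain ⟨y, hy, z, hz, rfl⟩ := hmN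
  have hzℳ : z ∈ ℳ i := by simpa using sub_mem hm (hN i hy)
  have hz' : z ∈ ⨆ (j) (_ : j ≠ i), ℳ j := iSup₂_mono (fun j _ => hN j) hz
  rw [Submodule.disjoint_def.1 (hℳ i) z hzℳ hz', add_zero]
  exact hy

open MvPolynomial

section MonomialSpan

variable {σ ι M : Type*} [Fintype σ] [AddCommGroup M] [Module (MvPolynomial σ R) M] [Module k M]

theorem isLowerSet_setOf_prod_X_pow_smul_ne_zero (x : M) :
    IsLowerSet {e : σ → ℕ | (∏ i, X i ^ e i : MvPolynomial σ R) • x ≠ 0} := by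
  intro e f hfe he hf
  apply he
  have hsplit : (∏ i, X i ^ e i : MvPolynomial σ R) =
      (∏ i, X i ^ (e i - f i)) * ∏ i, X i ^ f i := by
    rw [← Finset.prod_mul_distrib]
    exact Finset.prod_congr rfl fun i _ => by rw [← pow_add, Nat.sub_add_cancel (hfe i)]
  rw [hsplit, mul_smul, hf, smul_zero]

variable (k R) in
def monomialSpan (w : σ → ℤ) (z : ι → M) (α : ι → ℤ) (β : ι → ℕ) (c : ℤ × ℤ) :
    Submodule k M :=
  Submodule.span k {m | ∃ q e, m = (∏ i, X i ^ e i : MvPolynomial σ R) • z q ∧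
    c = (α q + expWeight w e, ((β q + expDeg e : ℕ) : ℤ))}

theorem smul_mem_iSup_monomialSpan [IsScalarTower k (MvPolynomial σ R) M] (w : σ → ℤ)
    (z : ι → M) (α : ι → ℤ) (β : ι → ℕ) {x : M}
    (hx : ∀ r : R, (C r : MvPolynomial σ R) • x ∈ Submodule.span k (Set.range z))
    (s : MvPolynomial σ R) : s • x ∈ ⨆ c, monomialSpan k R w z α β c := by
  induction s using MvPolynomial.induction_on' with
  | monomial u r =>
    rw [monomial_eq, Finsupp.prod_fintype _ _ fun _ => pow_zero _, mul_comm, mul_smul]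
    refine (Submodule.map_span_le (DistribSMul.toLinearMap k M (∏ i, X i ^ u i)) _ _).2
      ?_ (Submodule.mem_map_of_mem (hx r))
    rintro _ ⟨q, rfl⟩
    exact Submodule.mem_iSup_of_mem _ (Submodule.subset_span ⟨q, u, rfl, rfl⟩)
  | add p q hp hq => rw [add_smul]; exact add_mem hp hq

end MonomialSpan

section BigradedModule

variable {v : ℕ} (G : StdGraded k R) (dd : Fin v → ℕ)

theorem C_mem_bigradePoly {δ : ℤ} {r : R} (hr : r ∈ G.deg δ) :
    (C r : MvPolynomial (Fin v) R) ∈ bigradePoly G dd δ 0 :=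
  Submodule.subset_span ⟨0, r, by simpa using hr, by simp, by simp⟩

theorem prod_X_pow_mem_bigradePoly (e : Fin v → ℕ) :
    (∏ i, X i ^ e i : MvPolynomial (Fin v) R) ∈
      bigradePoly G dd (expWeight (fun i => (dd i : ℤ)) e) (expDeg e) :=
  Submodule.subset_span ⟨e, 1, by simp [expWeight, G.deg_zero, Submodule.one_le.1],
    by simp [expDeg], by simp⟩

variable {G dd} {M : Type} [AddCommGroup M] [Module (MvPolynomial (Fin v) R) M] [Module k M]
  {ℳ : ℤ × ℤ → Submodule k M}

variable (G dd ℳ) in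
def IsBigradedModule : Prop :=
  ∀ (a b cg e : ℤ) (p : MvPolynomial (Fin v) R) (x : M),
    p ∈ bigradePoly G dd a b → x ∈ ℳ (cg, e) → p • x ∈ ℳ (a + cg, b + e)

theorem prod_X_pow_smul_mem (hsmul : IsBigradedModule G dd ℳ) {x : M} {α β : ℤ}
    (hx : x ∈ ℳ (α, β)) (e : Fin v → ℕ) :
    (∏ i, X i ^ e i : MvPolynomial (Fin v) R) • x ∈
      ℳ (α + expWeight (fun i => (dd i : ℤ)) e, β + expDeg e) := by
  rw [add_comm α, add_comm β]
  exact hsmul _ _ _ _ _ _ (prod_X_pow_mem_bigradePoly G dd e) hx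

theorem monomialSpan_le (hsmul : IsBigradedModule G dd ℳ) {ι : Type} {z : ι → M} {α : ι → ℤ}
    {β : ι → ℕ} (hz : ∀ q, z q ∈ ℳ (α q, β q)) (c : ℤ × ℤ) :
    monomialSpan k R (fun i => (dd i : ℤ)) z α β c ≤ ℳ c :=
  Submodule.span_le.2 fun _ ⟨q, e, hm, hc⟩ => by
    rw [hm, hc, Nat.cast_add]
    exact prod_X_pow_smul_mem hsmul (hz q) e

theorem exists_C_smul_eq_zero (hsmul : IsBigradedModule G dd ℳ) {x : M} {α β : ℤ}
    (hx : x ∈ ℳ (α, β)) (hfin : {a | ℳ (a, β) ≠ ⊥}.Finite) :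
    ∃ t : ℤ, ∀ δ, t ≤ δ → ∀ r ∈ G.deg δ, (C r : MvPolynomial (Fin v) R) • x = 0 := by
  obtain ⟨B, hB⟩ := hfin.bddAbove
  refine ⟨B - α + 1, fun δ hδ r hr => ?_⟩
  have hmem := hsmul δ 0 α β _ x (C_mem_bigradePoly G dd hr) hx
  have hbot : ℳ (δ + α, β) = ⊥ := by
    by_contra h
    have := hB h
    omega
  rw [zero_add, hbot] at hmem
  exact (Submodule.mem_bot k).1 hmem

theorem exists_finite_C_smul_span [IsScalarTower k (MvPolynomial (Fin v) R) M]
    (hsmul : IsBigradedModule G dd ℳ) {x : M} {α : ℤ} {β : ℕ} (hx : x ∈ ℳ (α, β))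
    (hfin : {a | ℳ (a, β) ≠ ⊥}.Finite) :
    ∃ P : Set (M × ℤ × ℕ), P.Finite ∧ (∀ z ∈ P, z.1 ∈ ℳ (z.2.1, z.2.2)) ∧
      ∀ r : R, (C r : MvPolynomial (Fin v) R) • x ∈ Submodule.span k (Prod.fst '' P) := by
  obtain ⟨t, ht⟩ := exists_C_smul_eq_zero hsmul hx hfin
  choose sp hsp using G.deg_fg
  have hsp_deg : ∀ δ, ∀ r ∈ sp δ, r ∈ G.deg δ := fun δ r hr => hsp δ ▸ Submodule.subset_span hr
  set P := ⋃ δ ∈ Set.Ico 0 t, (fun r => ((C r : MvPolynomial (Fin v) R) • x, δ + α, β)) '' sp δ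
  refine ⟨P, (Set.finite_Ico 0 t).biUnion fun δ _ => (sp δ).finite_toSet.image _, ?_,
    fun r => ?_⟩
  · simp only [P, Set.mem_iUnion, Set.mem_image]
    rintro _ ⟨δ, -, r, hr, rfl⟩
    simpa using hsmul δ 0 α β _ x (C_mem_bigradePoly G dd (hsp_deg δ r hr)) hx
  have hr : r ∈ ⨆ δ, G.deg δ := G.internal.submodule_iSup_eq_top ▸ Submodule.mem_top
  refine Submodule.iSup_induction G.deg
    (motive := fun r => (C r : MvPolynomial (Fin v) R) • x ∈ _) hr (fun δ r hr => ?_) (by simp)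
    fun r r' h h' => by rw [map_add, add_smul]; exact add_mem h h'
  rcases lt_or_ge δ 0 with hδ | hδ
  · rw [G.bot_of_neg δ hδ, Submodule.mem_bot] at hr
    simp [hr]
  rcases le_or_gt t δ with htδ | htδ
  · rw [ht δ htδ r hr]; exact zero_mem _
  rw [← hsp δ] at hr
  induction hr using Submodule.span_induction with
  | mem r hr => exact Submodule.subset_span ⟨_, Set.mem_biUnion ⟨hδ, htδ⟩ ⟨r, hr, rfl⟩, rfl⟩
  | zero => simp
  | add r r' _ _ h h' => rw [map_add, add_smul]; exact add_mem h h'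
  | smul c r _ h =>
    rw [C_apply, ← smul_monomial, smul_assoc, ← C_apply]
    exact Submodule.smul_mem _ c h

theorem exists_finite_le_monomialSpan [IsScalarTower k (MvPolynomial (Fin v) R) M]
    (hℳ : iSupIndep ℳ) [Module.Finite (MvPolynomial (Fin v) R) M]
    (hsmul : IsBigradedModule G dd ℳ) {N : ℕ}
    (hfin : ∀ n : ℕ, N ≤ n → {a : ℤ | ℳ (a, n) ≠ ⊥}.Finite) :
    ∃ (ι : Type) (_ : Finite ι) (z : ι → M) (α : ι → ℤ) (β : ι → ℕ),
      (∀ q, z q ∈ ℳ (α q, β q)) ∧ ∀ n : ℕ, N ≤ n → ∀ a,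
        ℳ (a, n) ≤ monomialSpan k R (fun i => (dd i : ℤ)) z α β (a, n) := by
  have := G.isNoetherianRing
  have : IsNoetherian (MvPolynomial (Fin v) R) M := isNoetherian_of_isNoetherianRing_of_finite _ _
  set T := {x | ∃ (a : ℤ) (n : ℕ), N ≤ n ∧ x ∈ ℳ (a, n)}
  obtain ⟨T', hT'T, hspanT⟩ := (Submodule.fg_span_iff_fg_span_finset_subset T).1
    (IsNoetherian.noetherian (Submodule.span (MvPolynomial (Fin v) R) T))
  have hgen : ∀ x : T', ∃ P : Set (M × ℤ × ℕ), P.Finite ∧ (∀ z ∈ P, z.1 ∈ ℳ (z.2.1, z.2.2)) ∧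
      ∀ r : R, (C r : MvPolynomial (Fin v) R) • x.1 ∈ Submodule.span k (Prod.fst '' P) := by
    rintro ⟨x, hx⟩
    obtain ⟨α, β, hβ, hxm⟩ := hT'T hx
    exact exists_finite_C_smul_span hsmul hxm (hfin β hβ)
  choose P hPfin hPhom hPspan using hgen
  set Q := ⋃ x, P x
  have hQhom : ∀ q : Q, q.1.1 ∈ ℳ (q.1.2.1, q.1.2.2) := fun ⟨z, hz⟩ =>
    let ⟨x, hx⟩ := Set.mem_iUnion.1 hz; hPhom x z hx
  refine ⟨Q, (Set.finite_iUnion hPfin).to_subtype, _, _, _, hQhom, fun n hn a m hm => ?_⟩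
  have hmT : m ∈ Submodule.span (MvPolynomial (Fin v) R) (T' : Set M) :=
    hspanT ▸ Submodule.subset_span ⟨a, n, hn, hm⟩
  obtain ⟨f, -, rfl⟩ := Submodule.mem_span_finset.1 hmT
  refine hℳ.mem_of_mem_iSup_of_le (monomialSpan_le hsmul hQhom) hm
    (Submodule.sum_mem _ fun x hx => smul_mem_iSup_monomialSpan _ _ _ _ (fun r => ?_) _)
  refine Submodule.span_mono ?_ (hPspan ⟨x, hx⟩ r)
  rintro _ ⟨z, hz, rfl⟩
  exact ⟨⟨z, Set.mem_iUnion.2 ⟨_, hz⟩⟩, rfl⟩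

theorem ne_bot_iff_mem_levelWeights (hsmul : IsBigradedModule G dd ℳ) {ι : Type} (z : ι → M)
    (α : ι → ℤ) (β : ι → ℕ) (hz : ∀ q, z q ∈ ℳ (α q, β q)) {n : ℕ} {a : ℤ}
    (hspan : ℳ (a, n) ≤ monomialSpan k R (fun i => (dd i : ℤ)) z α β (a, n)) :
    ℳ (a, n) ≠ ⊥ ↔ a ∈ levelWeights (fun i => (dd i : ℤ))
      (fun q => {e | (∏ i, X i ^ e i : MvPolynomial (Fin v) R) • z q ≠ 0}) α β n := by
  constructor
  · intro hne
    by_contra h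
    refine hne (eq_bot_iff.2 (hspan.trans (Submodule.span_le.2 ?_)))
    rintro _ ⟨q, e, rfl, hc⟩
    simp only [Prod.mk.injEq, Nat.cast_inj] at hc
    by_contra hm
    exact h ⟨q, e, hm, hc.2, hc.1⟩
  · rintro ⟨q, e, he, rfl, rfl⟩ hbot
    have hmem := prod_X_pow_smul_mem hsmul (hz q) e
    rw [← Nat.cast_add, hbot] at hmem
    exact he ((Submodule.mem_bot k).1 hmem)

end BigradedModule

/-- Let `M` be a finitely generated bigraded module over the bigraded polynomial ring
`S = R[y₁, …, y_v]` (with `bideg y_i = (d_i, 1)`) such that the graded `R`-module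
`M_n = ⊕_a M_{(a,n)}` has finite length (i.e. finitely many nonvanishing degrees) for
all large `n`.  Then either `M_n = 0` for all large `n`, or the largest nonvanishing
degree `a(M_n)` is eventually a linear function of `n` with slope some `d_i`. -/
theorem stmt15 (G : StdGraded k R) (v : ℕ) (dd : Fin v → ℕ)
    (M : Type) [AddCommGroup M] [Module (MvPolynomial (Fin v) R) M]
    [Module k M] [IsScalarTower k (MvPolynomial (Fin v) R) M]
    (ℳ : ℤ × ℤ → Submodule k M)
    (hInternal : DirectSum.IsInternal ℳ)
    (hfg : Module.Finite (MvPolynomial (Fin v) R) M)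
    (hsmul : ∀ (a b cg e : ℤ) (p : MvPolynomial (Fin v) R) (x : M),
      p ∈ bigradePoly G dd a b → x ∈ ℳ (cg, e) → p • x ∈ ℳ (a + cg, b + e))
    (hfl : ∃ N : ℕ, ∀ n : ℕ, N ≤ n → {a : ℤ | ℳ (a, (n : ℤ)) ≠ ⊥}.Finite) :
    (∃ N : ℕ, ∀ n : ℕ, N ≤ n → ∀ a : ℤ, ℳ (a, (n : ℤ)) = ⊥) ∨
      (∃ (iv : Fin v) (e : ℤ) (N : ℕ), ∀ n : ℕ, N ≤ n →
        (∃ a : ℤ, ℳ (a, (n : ℤ)) ≠ ⊥) ∧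
        sSup {a : ℤ | ℳ (a, (n : ℤ)) ≠ ⊥} = (dd iv : ℤ) * n + e) := by
  obtain ⟨N, hfin⟩ := hfl
  obtain ⟨ι, _, z, α, β, hz, hspan⟩ :=
    exists_finite_le_monomialSpan hInternal.submodule_iSupIndep hsmul hfin
  have hlevel : ∀ n, N ≤ n → {a : ℤ | ℳ (a, n) ≠ ⊥} = levelWeights (fun i => (dd i : ℤ))
      (fun q => {e | (∏ i, X i ^ e i : MvPolynomial (Fin v) R) • z q ≠ 0}) α β n :=
    fun n hn => Set.ext fun a => ne_bot_iff_mem_levelWeights hsmul z α β hz (hspan n hn a)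
  rcases levelWeights_eventually_empty_or_linear (fun i => (dd i : ℤ)) _
      (fun q => isLowerSet_setOf_prod_X_pow_smul_ne_zero (R := R) (z q)) α β with
    ⟨N', h⟩ | ⟨i, c, N', h⟩
  · refine .inl ⟨max N N', fun n hn a => not_not.1 fun ha => ?_⟩
    have : a ∈ {a : ℤ | ℳ (a, n) ≠ ⊥} := ha
    rwa [hlevel n (le_of_max_le_left hn), h n (le_of_max_le_right hn)] at this
  · refine .inr ⟨i, c, max N N', fun n hn => ?_⟩
    have hg := h n (le_of_max_le_right hn)
    rw [← hlevel n (le_of_max_le_left hn)] at hg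
    exact ⟨⟨_, hg.1⟩, hg.csSup_eq⟩
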